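/- arXiv:2306.07433 — 3 statements merged into one kernel-verified Lean document; each statement's English description precedes it below -/
import Mathlib

section
/- Let a ≠ 0, b, c be real numbers and I be a bounded interval of the real line. Then the Lebesgue measure of the set {x ∈ ℝ : a x² + b x + c ∈ I} is at most C · |I|^{1/2} / |a|^{1/2} for some universal constant C. -/
/-!
Completing the square, `{x | a x² + b x + c ∈ I}` is a translate of the preimage under `x ↦ x²`
of an interval of length `|I| / |a|`. The preimage of `[u, v]` under squaring is two intervals of
length `√v - √u ≤ √(v - u)`, which gives the bound with `C = 2`.
-/

open MeasureTheory Set Metric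

namespace Real

theorem sqrt_sub_sqrt_le_sqrt_sub (u v : ℝ) : √v - √u ≤ √(v - u) := by
  rcases le_total v u with hvu | huv
  · linarith [sqrt_le_sqrt hvu, sqrt_nonneg (v - u)]
  rcases le_total u 0 with hu | hu
  · rw [sqrt_eq_zero_of_nonpos hu, sub_zero]
    exact sqrt_le_sqrt (by linarith)
  · rw [sub_le_iff_le_add, sqrt_le_left (by positivity)]
    nlinarith [sq_sqrt hu, sq_sqrt (sub_nonneg.2 huv),
      mul_nonneg (sqrt_nonneg (v - u)) (sqrt_nonneg u)]

/-- For `u < 0` the junk value `√u = 0` makes the two inner endpoints meet at `0`, as they should. -/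
theorem sq_preimage_Icc_subset (u v : ℝ) :
    (· ^ 2) ⁻¹' Icc u v ⊆ Icc (√u) (√v) ∪ Icc (-√v) (-√u) := by
  rintro x ⟨hux, hxv⟩
  have hlow : √u ≤ |x| := by
    simpa only [sqrt_sq_eq_abs] using sqrt_le_sqrt hux
  have hupp : |x| ≤ √v := abs_le_sqrt hxv
  rcases le_total 0 x with hx | hx
  · rw [abs_of_nonneg hx] at hlow hupp
    exact Or.inl ⟨hlow, hupp⟩
  · rw [abs_of_nonpos hx] at hlow hupp
    exact Or.inr ⟨by linarith, by linarith⟩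

theorem volume_sq_preimage_Icc_le (u v : ℝ) :
    volume ((· ^ 2) ⁻¹' Icc u v : Set ℝ) ≤ ENNReal.ofReal (2 * √(v - u)) :=
  calc volume ((· ^ 2) ⁻¹' Icc u v : Set ℝ)
      ≤ volume (Icc (√u) (√v)) + volume (Icc (-√v) (-√u)) :=
        (measure_mono (sq_preimage_Icc_subset u v)).trans (measure_union_le _ _)
    _ = ENNReal.ofReal (√v - √u) + ENNReal.ofReal (√v - √u) := by
        rw [volume_Icc, volume_Icc, neg_sub_neg]
    _ ≤ ENNReal.ofReal (√(v - u)) + ENNReal.ofReal (√(v - u)) := by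
        gcongr <;> exact sqrt_sub_sqrt_le_sqrt_sub u v
    _ = ENNReal.ofReal (2 * √(v - u)) := by
        rw [← ENNReal.ofReal_add (sqrt_nonneg _) (sqrt_nonneg _), two_mul]

theorem volume_sq_preimage_closedBall_le (s r : ℝ) :
    volume ((· ^ 2) ⁻¹' closedBall s r : Set ℝ) ≤ ENNReal.ofReal (2 * √(2 * r)) := by
  rw [closedBall_eq_Icc]
  convert volume_sq_preimage_Icc_le (s - r) (s + r) using 4
  ring

theorem preimage_mul_add_closedBall {a : ℝ} (ha : a ≠ 0) (k t r : ℝ) :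
    (fun y ↦ a * y + k) ⁻¹' closedBall t r = closedBall ((t - k) / a) (r / |a|) := by
  ext y
  have hdist : dist (a * y + k) t = |a| * dist y ((t - k) / a) := by
    rw [dist_eq, dist_eq, ← abs_mul, mul_sub, mul_div_cancel₀ _ ha]
    ring_nf
  simp only [mem_preimage, mem_closedBall, hdist, le_div_iff₀' (abs_pos.2 ha)]

theorem volume_quadratic_preimage_closedBall_le {a : ℝ} (ha : a ≠ 0) (b c t r : ℝ) :
    volume {x : ℝ | a * x ^ 2 + b * x + c ∈ closedBall t r} ≤
      ENNReal.ofReal (2 * √(2 * (r / |a|))) := by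
  have hsquare : {x : ℝ | a * x ^ 2 + b * x + c ∈ closedBall t r} =
      (· + b / (2 * a)) ⁻¹' ((· ^ 2) ⁻¹'
        ((fun y ↦ a * y + (c - b ^ 2 / (4 * a))) ⁻¹' closedBall t r)) := by
    ext x
    simp only [mem_ofPred_eq, mem_preimage]
    congr! 1
    field_simp
    ring
  rw [hsquare, measure_preimage_add_right, preimage_mul_add_closedBall ha]
  exact volume_sq_preimage_closedBall_le _ _

theorem volume_eq_ofReal_sSup_sub_sInf {I : Set ℝ} (hI : I.OrdConnected)
    (hb : Bornology.IsBounded I) : volume I = ENNReal.ofReal (sSup I - sInf I) := by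
  refine le_antisymm ((volume_le_diam I).trans_eq (ediam_eq hb)) ?_
  rcases I.eq_empty_or_nonempty with rfl | hne
  · simp
  rw [← volume_Ioo]
  exact measure_mono <|
    IsConnected.Ioo_csInf_csSup_subset ⟨hne, hI.isPreconnected⟩ hb.bddBelow hb.bddAbove

end Real

/-- Sublevel-set measure bound for quadratic polynomials. -/
theorem quadratic_sublevel_measure_bound :
    ∃ C : ℝ, 0 < C ∧ ∀ (a b c : ℝ), a ≠ 0 →
      ∀ I : Set ℝ, I.OrdConnected → Bornology.IsBounded I →
        volume {x : ℝ | a * x ^ 2 + b * x + c ∈ I} ≤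
          ENNReal.ofReal (C * Real.sqrt (volume I).toReal / Real.sqrt |a|) := by
  refine ⟨2, two_pos, fun a b c ha I hI hb => ?_⟩
  set L := sSup I - sInf I
  have hL : 0 ≤ L := sub_nonneg.2 (Real.sInf_le_sSup I hb.bddBelow hb.bddAbove)
  have hvol : (volume I).toReal = L := by
    rw [Real.volume_eq_ofReal_sSup_sub_sInf hI hb, ENNReal.toReal_ofReal hL]
  have hball : I ⊆ closedBall ((sInf I + sSup I) / 2) (L / 2) := by
    convert hb.subset_Icc_sInf_sSup using 1
    rw [Real.closedBall_eq_Icc]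
    congr 1 <;> ring
  calc volume {x : ℝ | a * x ^ 2 + b * x + c ∈ I}
      ≤ volume {x : ℝ | a * x ^ 2 + b * x + c ∈ closedBall ((sInf I + sSup I) / 2) (L / 2)} :=
        measure_mono fun x hx ↦ hball hx
    _ ≤ ENNReal.ofReal (2 * √(2 * (L / 2 / |a|))) :=
        Real.volume_quadratic_preimage_closedBall_le ha b c _ _
    _ = ENNReal.ofReal (2 * √(volume I).toReal / √|a|) := by
        rw [hvol, show 2 * (L / 2 / |a|) = L / |a| by ring, Real.sqrt_div hL, mul_div_assoc]
end

section
/- Let a ≠ 0, b, c be real numbers and I be a bounded interval of the real line. Then the number of integers q with a q² + b q + c ∈ I is at most C · (|I|^{1/2} / |a|^{1/2} + 1) for some universal constant C. -/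
/-!
Completing the square, `a q² + b q + c ∈ [m, M]` says that `(q + b / 2a)²` lies in an interval
`[u, v]` of length `(M - m) / |a|`. Then `|q + b / 2a| ∈ [√u, √v]`, and `√v - √u ≤ √(v - u)`, so
`q` lies in two intervals each containing at most `√((M - m) / |a|) + 1` integers. A bounded
order-connected `I` lies in `[inf I, sup I]`, whose length is at most the measure of `I`.
-/

open MeasureTheory Set

theorem Set.OrdConnected.sSup_sub_sInf_le_volume {s : Set ℝ} (hs : s.OrdConnected)
    (hb : Bornology.IsBounded s) : sSup s - sInf s ≤ (volume s).toReal := by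
  rcases s.eq_empty_or_nonempty with rfl | hne
  · simp
  have hIoo : Ioo (sInf s) (sSup s) ⊆ s :=
    IsConnected.Ioo_csInf_csSup_subset ⟨hne, hs.isPreconnected⟩ hb.bddBelow hb.bddAbove
  calc sSup s - sInf s = volume.real (Ioo (sInf s) (sSup s)) :=
        (Real.volume_real_Ioo_of_le (csInf_le_csSup hne hb.bddBelow hb.bddAbove)).symm
    _ ≤ volume.real s := measureReal_mono hIoo hb.measure_lt_top.ne

-- No sign conditions are needed because `√` vanishes on negative reals.
theorem Real.sqrt_sub_sqrt_le (x y : ℝ) : √x - √y ≤ √(x - y) := by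
  rcases le_total x y with hxy | hyx
  · linarith [Real.sqrt_le_sqrt hxy, Real.sqrt_nonneg (x - y)]
  rcases le_total y 0 with hy | hy
  · rw [Real.sqrt_eq_zero'.2 hy, sub_zero]
    exact Real.sqrt_le_sqrt (by linarith)
  rw [sub_le_iff_le_add, Real.sqrt_le_iff]
  refine ⟨by positivity, ?_⟩
  nlinarith [Real.sq_sqrt hy, Real.sq_sqrt (sub_nonneg.2 hyx),
    mul_nonneg (Real.sqrt_nonneg (x - y)) (Real.sqrt_nonneg y)]

theorem Int.setOf_cast_mem_Icc (α β : ℝ) :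
    {q : ℤ | (q : ℝ) ∈ Icc α β} = Finset.Icc ⌈α⌉ ⌊β⌋ := by
  ext q
  simp [Int.ceil_le, Int.le_floor]

theorem Int.ncard_setOf_cast_mem_Icc_le (α β : ℝ) :
    ({q : ℤ | (q : ℝ) ∈ Icc α β}.ncard : ℝ) ≤ max (β - α + 1) 0 := by
  rw [Int.setOf_cast_mem_Icc, ncard_coe_finset, Int.card_Icc, ← Int.cast_natCast, Int.toNat_eq_max]
  push_cast
  gcongr
  linarith [Int.floor_le β, Int.le_ceil α]

theorem Int.finite_setOf_cast_mem_Icc (α β : ℝ) : {q : ℤ | (q : ℝ) ∈ Icc α β}.Finite := by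
  rw [Int.setOf_cast_mem_Icc]
  exact Finset.finite_toSet _

theorem Int.finite_setOf_add_sq_mem_Icc_and_ncard_le (d u v : ℝ) :
    {q : ℤ | ((q : ℝ) + d) ^ 2 ∈ Icc u v}.Finite ∧
      ({q : ℤ | ((q : ℝ) + d) ^ 2 ∈ Icc u v}.ncard : ℝ) ≤ 2 * (√(v - u) + 1) := by
  set A := {q : ℤ | (q : ℝ) ∈ Icc (√u - d) (√v - d)}
  set B := {q : ℤ | (q : ℝ) ∈ Icc (-√v - d) (-√u - d)}
  have hsub : {q : ℤ | ((q : ℝ) + d) ^ 2 ∈ Icc u v} ⊆ A ∪ B := by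
    rintro q ⟨hu, hv⟩
    have hlo : √u ≤ |(q : ℝ) + d| := Real.sqrt_sq_eq_abs ((q : ℝ) + d) ▸ Real.sqrt_le_sqrt hu
    have hhi : |(q : ℝ) + d| ≤ √v := Real.sqrt_sq_eq_abs ((q : ℝ) + d) ▸ Real.sqrt_le_sqrt hv
    rcases abs_cases ((q : ℝ) + d) with ⟨habs, _⟩ | ⟨habs, _⟩
    · exact Or.inl ⟨by linarith, by linarith⟩
    · exact Or.inr ⟨by linarith, by linarith⟩
  have hfin : (A ∪ B).Finite :=
    (Int.finite_setOf_cast_mem_Icc _ _).union (Int.finite_setOf_cast_mem_Icc _ _)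
  have hlen : max (√v - √u + 1) 0 ≤ √(v - u) + 1 :=
    max_le (by linarith [Real.sqrt_sub_sqrt_le v u]) (by positivity)
  have hA : (A.ncard : ℝ) ≤ √(v - u) + 1 := by
    grw [Int.ncard_setOf_cast_mem_Icc_le, sub_sub_sub_cancel_right, hlen]
  have hB : (B.ncard : ℝ) ≤ √(v - u) + 1 := by
    grw [Int.ncard_setOf_cast_mem_Icc_le, sub_sub_sub_cancel_right, neg_sub_neg, hlen]
  refine ⟨hfin.subset hsub, ?_⟩
  calc _ ≤ ((A ∪ B).ncard : ℝ) := by exact_mod_cast ncard_le_ncard hsub hfin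
    _ ≤ A.ncard + B.ncard := by exact_mod_cast ncard_union_le A B
    _ ≤ 2 * (√(v - u) + 1) := by linarith

theorem finite_setOf_quadratic_mem_Icc_and_ncard_le_of_pos {a : ℝ} (ha : 0 < a) (b c m M : ℝ) :
    {q : ℤ | a * (q : ℝ) ^ 2 + b * q + c ∈ Icc m M}.Finite ∧
      ({q : ℤ | a * (q : ℝ) ^ 2 + b * q + c ∈ Icc m M}.ncard : ℝ) ≤
        2 * (√((M - m) / a) + 1) := by
  set d := b / (2 * a)
  set k := c - b ^ 2 / (4 * a)
  have hsq (x : ℝ) : a * x ^ 2 + b * x + c = a * (x + d) ^ 2 + k := by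
    simp only [d, k]
    field_simp
    ring
  have hset : {q : ℤ | a * (q : ℝ) ^ 2 + b * q + c ∈ Icc m M} =
      {q : ℤ | ((q : ℝ) + d) ^ 2 ∈ Icc ((m - k) / a) ((M - k) / a)} := by
    ext q
    simp only [mem_Icc, hsq, div_le_iff₀ ha, le_div_iff₀ ha]
    constructor <;> rintro ⟨h1, h2⟩ <;> constructor <;> linarith
  have hwidth : (M - k) / a - (m - k) / a = (M - m) / a := by ring
  rw [hset, ← hwidth]
  exact Int.finite_setOf_add_sq_mem_Icc_and_ncard_le d _ _

theorem finite_setOf_quadratic_mem_Icc_and_ncard_le {a : ℝ} (ha : a ≠ 0) (b c m M : ℝ) :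
    {q : ℤ | a * (q : ℝ) ^ 2 + b * q + c ∈ Icc m M}.Finite ∧
      ({q : ℤ | a * (q : ℝ) ^ 2 + b * q + c ∈ Icc m M}.ncard : ℝ) ≤
        2 * (√((M - m) / |a|) + 1) := by
  rcases ha.lt_or_gt with hneg | hpos
  · have hset : {q : ℤ | a * (q : ℝ) ^ 2 + b * q + c ∈ Icc m M} =
        {q : ℤ | -a * (q : ℝ) ^ 2 + -b * q + -c ∈ Icc (-M) (-m)} := by
      ext q
      simp only [mem_Icc]
      constructor <;> rintro ⟨h1, h2⟩ <;> constructor <;> linarith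
    rw [hset, abs_of_neg hneg, show M - m = -m - -M by ring]
    exact finite_setOf_quadratic_mem_Icc_and_ncard_le_of_pos (neg_pos.2 hneg) _ _ _ _
  · rw [abs_of_pos hpos]
    exact finite_setOf_quadratic_mem_Icc_and_ncard_le_of_pos hpos b c m M

/-- Counting integers where a quadratic polynomial lies in a bounded interval. -/
theorem quadratic_integer_count_bound :
    ∃ C : ℝ, 0 < C ∧ ∀ (a b c : ℝ), a ≠ 0 →
      ∀ I : Set ℝ, I.OrdConnected → Bornology.IsBounded I →
        {q : ℤ | a * (q : ℝ) ^ 2 + b * q + c ∈ I}.Finite ∧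
        ({q : ℤ | a * (q : ℝ) ^ 2 + b * q + c ∈ I}.ncard : ℝ) ≤
          C * (Real.sqrt (volume I).toReal / Real.sqrt |a| + 1) := by
  refine ⟨2, two_pos, fun a b c ha I hI hbd => ?_⟩
  have hsub : {q : ℤ | a * (q : ℝ) ^ 2 + b * q + c ∈ I} ⊆
      {q : ℤ | a * (q : ℝ) ^ 2 + b * q + c ∈ Icc (sInf I) (sSup I)} :=
    fun q hq => hbd.subset_Icc_sInf_sSup hq
  obtain ⟨hfin, hcard⟩ := finite_setOf_quadratic_mem_Icc_and_ncard_le ha b c (sInf I) (sSup I)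
  refine ⟨hfin.subset hsub, ?_⟩
  calc _ ≤ ({q : ℤ | a * (q : ℝ) ^ 2 + b * q + c ∈ Icc (sInf I) (sSup I)}.ncard : ℝ) := by
        exact_mod_cast ncard_le_ncard hsub hfin
    _ ≤ 2 * (√((sSup I - sInf I) / |a|) + 1) := hcard
    _ ≤ 2 * (√(volume I).toReal / √|a| + 1) := by
        rw [Real.sqrt_div' _ (abs_nonneg a)]
        gcongr
        exact hI.sSup_sub_sInf_le_volume hbd
end

section
/- Let w(ξ, q) = ξ³ + ξ q² and H(ξ₁, q₁, ξ₂, q₂) = w(ξ₁+ξ₂, q₁+q₂) − w(ξ₁, q₁) − w(ξ₂, q₂). For fixed ξ = ξ₁ + ξ₂ ∈ ℝ with ξ > 0, fixed q ∈ ℝ, fixed q₁ ∈ ℝ, and any bounded interval I ⊆ ℝ, the Lebesgue measure of { ξ₁ ∈ ℝ : H(ξ₁, q₁, ξ − ξ₁, q − q₁) ∈ I } is at most C |I|^{1/2} / ξ^{1/2} for a universal constant C. -/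
/-!
Expanding the cube, `H(ξ₁, q₁, ξ - ξ₁, q - q₁)` is a quadratic polynomial in `ξ₁` with leading
coefficient `-3ξ`. After completing the square, `ξ₁` lies in the sublevel set exactly when
`(ξ₁ + e)²` lies in an interval of length `|I| / (3ξ)`, and the set of `y` with `y²` in an interval
`[s, t]` consists of two intervals of length `√t - √s ≤ √(t - s)` each.
-/

open MeasureTheory Set

theorem Real.sqrt_sub_sqrt_le_sqrt_sub_s19 (s t : ℝ) : √t - √s ≤ √(t - s) := by
  rcases le_total s 0 with hs | hs
  · rw [Real.sqrt_eq_zero_of_nonpos hs, sub_zero]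
    exact Real.sqrt_le_sqrt (by linarith)
  rcases le_total t s with hts | hst
  · linarith [Real.sqrt_le_sqrt hts, Real.sqrt_nonneg (t - s)]
  · rw [sub_le_iff_le_add, Real.sqrt_le_left (by positivity)]
    nlinarith [Real.sq_sqrt hs, Real.sq_sqrt (sub_nonneg.2 hst), Real.sqrt_nonneg s,
      Real.sqrt_nonneg (t - s)]

theorem Set.OrdConnected.volume_eq_ofReal_sSup_sub_sInf {I : Set ℝ} (hI : I.OrdConnected)
    (hb : Bornology.IsBounded I) : volume I = ENNReal.ofReal (sSup I - sInf I) := by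
  rcases I.eq_empty_or_nonempty with rfl | hne
  · simp
  refine le_antisymm ?_ ?_
  · rw [← Real.volume_Icc]
    exact measure_mono (subset_Icc_csInf_csSup hb.bddBelow hb.bddAbove)
  · rw [← Real.volume_Ioo]
    exact measure_mono
      (IsConnected.Ioo_csInf_csSup_subset ⟨hne, hI.isPreconnected⟩ hb.bddBelow hb.bddAbove)

theorem Real.volume_setOf_abs_mem_Icc_le (a b : ℝ) :
    volume {y : ℝ | |y| ∈ Icc a b} ≤ 2 * ENNReal.ofReal (b - a) :=
  calc volume {y : ℝ | |y| ∈ Icc a b}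
      ≤ volume (Icc a b ∪ Icc (-b) (-a)) := by
        refine measure_mono fun y ⟨hay, hyb⟩ => ?_
        rcases abs_cases y with ⟨hy, -⟩ | ⟨hy, -⟩
        · exact Or.inl ⟨hy ▸ hay, hy ▸ hyb⟩
        · exact Or.inr ⟨by linarith, by linarith⟩
    _ ≤ volume (Icc a b) + volume (Icc (-b) (-a)) := measure_union_le _ _
    _ = 2 * ENNReal.ofReal (b - a) := by
        rw [Real.volume_Icc, Real.volume_Icc, neg_sub_neg, two_mul]

theorem Real.volume_setOf_sq_mem_Icc_le (s t : ℝ) :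
    volume {y : ℝ | y ^ 2 ∈ Icc s t} ≤ 2 * ENNReal.ofReal √(t - s) :=
  calc volume {y : ℝ | y ^ 2 ∈ Icc s t}
      ≤ volume {y : ℝ | |y| ∈ Icc √s √t} := by
        refine measure_mono fun y ⟨hsy, hyt⟩ => ?_
        change √s ≤ |y| ∧ |y| ≤ √t
        rw [← Real.sqrt_sq_eq_abs]
        exact ⟨Real.sqrt_le_sqrt hsy, Real.sqrt_le_sqrt hyt⟩
    _ ≤ 2 * ENNReal.ofReal (√t - √s) := Real.volume_setOf_abs_mem_Icc_le _ _
    _ ≤ 2 * ENNReal.ofReal √(t - s) := by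
        gcongr
        exact Real.sqrt_sub_sqrt_le_sqrt_sub_s19 s t

theorem Real.volume_setOf_quadratic_mem_le {a : ℝ} (ha : a ≠ 0) (b c : ℝ) {I : Set ℝ}
    (hI : I.OrdConnected) (hb : Bornology.IsBounded I) :
    volume {x : ℝ | a * x ^ 2 + b * x + c ∈ I} ≤
      2 * ENNReal.ofReal √((volume I).toReal / |a|) := by
  set m := sInf I
  set M := sSup I
  have hmM : m ≤ M := Real.sInf_le_sSup I hb.bddBelow hb.bddAbove
  have hlen : (volume I).toReal = M - m := by
    rw [hI.volume_eq_ofReal_sSup_sub_sInf hb, ENNReal.toReal_ofReal (sub_nonneg.2 hmM)]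
  set e := b / (2 * a)
  set k := c - b ^ 2 / (4 * a)
  have hsquare : ∀ x, a * x ^ 2 + b * x + c = a * (x + e) ^ 2 + k := fun x => by
    simp only [e, k]
    field_simp
    ring
  have hsub : {x : ℝ | a * x ^ 2 + b * x + c ∈ I} ⊆
      (· + e) ⁻¹' {y : ℝ | y ^ 2 ∈ uIcc ((m - k) / a) ((M - k) / a)} := by
    intro x hx
    obtain ⟨hmx, hxM⟩ := subset_Icc_csInf_csSup hb.bddBelow hb.bddAbove hx
    rw [hsquare] at hmx hxM
    change (x + e) ^ 2 ∈ uIcc ((m - k) / a) ((M - k) / a)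
    rw [← preimage_const_mul_uIcc ha]
    exact Icc_subset_uIcc ⟨by linarith, by linarith⟩
  have hwidth : max ((m - k) / a) ((M - k) / a) - min ((m - k) / a) ((M - k) / a) =
      (volume I).toReal / |a| := by
    rw [max_sub_min_eq_abs, hlen, ← sub_div, sub_sub_sub_cancel_right, abs_div,
      abs_of_nonneg (by linarith)]
  calc volume {x : ℝ | a * x ^ 2 + b * x + c ∈ I}
      ≤ volume ((· + e) ⁻¹' {y : ℝ | y ^ 2 ∈ uIcc ((m - k) / a) ((M - k) / a)}) :=
        measure_mono hsub
    _ = volume {y : ℝ | y ^ 2 ∈ uIcc ((m - k) / a) ((M - k) / a)} :=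
        measure_preimage_add_right _ _ _
    _ ≤ 2 * ENNReal.ofReal √((volume I).toReal / |a|) := by
        rw [← hwidth]
        exact Real.volume_setOf_sq_mem_Icc_le _ _

/-- Sublevel-set bound for the resonance function in `ξ₁`: for `ξ > 0` and a
bounded interval `I`, the measure of
`{ξ₁ : H(ξ₁, q₁, ξ - ξ₁, q - q₁) ∈ I}` is at most `C |I|^{1/2} / ξ^{1/2}`,
where `H(ξ₁, q₁, ξ₂, q₂) = w(ξ₁+ξ₂, q₁+q₂) - w(ξ₁, q₁) - w(ξ₂, q₂)` and
`w(ξ, q) = ξ³ + ξ q²`. -/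
theorem resonance_sublevel_measure_bound :
    ∃ C : ℝ, 0 < C ∧ ∀ (ξ q q₁ : ℝ), 0 < ξ →
      ∀ I : Set ℝ, I.OrdConnected → Bornology.IsBounded I →
        volume {ξ₁ : ℝ |
            (ξ ^ 3 + ξ * q ^ 2) - (ξ₁ ^ 3 + ξ₁ * q₁ ^ 2)
              - ((ξ - ξ₁) ^ 3 + (ξ - ξ₁) * (q - q₁) ^ 2) ∈ I} ≤
          ENNReal.ofReal (C * Real.sqrt (volume I).toReal / Real.sqrt ξ) := by
  refine ⟨2, two_pos, fun ξ q q₁ hξ I hI hb => ?_⟩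
  have hH : ∀ x : ℝ, (ξ ^ 3 + ξ * q ^ 2) - (x ^ 3 + x * q₁ ^ 2)
      - ((ξ - x) ^ 3 + (ξ - x) * (q - q₁) ^ 2) =
        (-3 * ξ) * x ^ 2 + (3 * ξ ^ 2 + (q - q₁) ^ 2 - q₁ ^ 2) * x
          + ξ * (q ^ 2 - (q - q₁) ^ 2) := fun x => by ring
  simp_rw [hH]
  calc _ ≤ 2 * ENNReal.ofReal √((volume I).toReal / |-3 * ξ|) :=
        Real.volume_setOf_quadratic_mem_le (by linarith) _ _ hI hb
    _ ≤ 2 * ENNReal.ofReal (√(volume I).toReal / √ξ) := by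
        rw [← Real.sqrt_div' _ hξ.le, abs_of_neg (by linarith)]
        gcongr
        linarith
    _ = _ := by rw [mul_div_assoc, ENNReal.ofReal_mul zero_le_two, ENNReal.ofReal_ofNat]
end
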